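/- A matching M of a finite simple graph G is of maximum cardinality if and only if G contains no M-augmenting path. -/

import Mathlib

/-!
Flipping the edges of an `M`-augmenting path `p` (the symmetric difference `M ∆ E(p)`) gives a
matching with one more edge, because an alternating path that starts and ends outside `M` has
one more edge outside `M` than inside.

Conversely, let `N` be a larger matching. Counting saturated vertices gives an edge `uw ∈ N` with
`u` free in `M`. If `w` is free as well, `uw` is augmenting; otherwise `w` is matched by some
`wx ∈ M`. After deleting all edges at `u` and `w`, the matchings `M - wx` and `N - uw` still
differ in size, so by induction on `|N|` there is an `(M - wx)`-augmenting path avoiding `u` and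
`w`. It is `M`-augmenting unless it ends at `x`, and then prefixing `u w` makes it so.
-/

open SimpleGraph Finset

variable {V : Type*}

/-- `M` is a matching of `G`: every edge of `M` is an edge of `G` and no two
distinct edges of `M` share a vertex. -/
def IsMatchingF (G : SimpleGraph V) (M : Finset (Sym2 V)) : Prop :=
  (∀ e ∈ M, e ∈ G.edgeSet) ∧
    ∀ e ∈ M, ∀ f ∈ M, e ≠ f → ∀ v : V, v ∈ e → v ∉ f

/-- `v` is unmatched (unsaturated) by the matching `M`. -/
def UnmatchedF (M : Finset (Sym2 V)) (v : V) : Prop := ∀ e ∈ M, v ∉ e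

/-- A list of edges alternates with respect to `M` (consecutive edges differ in
membership in `M`). -/
def AltListF (M : Finset (Sym2 V)) (l : List (Sym2 V)) : Prop :=
  l.Chain' fun e f => (e ∈ M ↔ f ∉ M)

/-- `p` is an `M`-augmenting path: a path alternating w.r.t. `M` whose two
(distinct) endpoints are both `M`-unmatched. -/
def IsAugPathF (G : SimpleGraph V) (M : Finset (Sym2 V)) {u v : V}
    (p : G.Walk u v) : Prop :=
  p.IsPath ∧ u ≠ v ∧ AltListF M p.edges ∧ UnmatchedF M u ∧ UnmatchedF M v


namespace AltListF

variable {M M' : Finset (Sym2 V)} {l : List (Sym2 V)}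

lemma reverse (h : AltListF M l) : AltListF M l.reverse :=
  List.isChain_reverse.mpr (h.imp fun _ _ hab => by tauto)

lemma congr (hMM' : ∀ e ∈ l, e ∈ M ↔ e ∈ M') (h : AltListF M l) : AltListF M' l := by
  refine List.isChain_iff_getElem.mpr fun i hi => ?_
  rw [← hMM' _ (List.getElem_mem _), ← hMM' _ (List.getElem_mem _)]
  exact List.isChain_iff_getElem.mp h i hi

lemma length_filter_notMem [DecidableEq V] :
    ∀ {l : List (Sym2 V)}, AltListF M l → l ≠ [] → (∀ e ∈ l.head?, e ∉ M) →
      (∀ e ∈ l.getLast?, e ∉ M) →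
      (l.filter (· ∉ M)).length = (l.filter (· ∈ M)).length + 1
  | [], _, hne, _, _ => absurd rfl hne
  | [e], _, _, hhead, _ => by simp [hhead e rfl]
  | [e, f], h, _, hhead, hlast => by
      have := (List.isChain_cons_cons.mp h).1
      exact absurd (by tauto) (hlast f rfl)
  | e :: f :: g :: t, h, _, hhead, hlast => by
      obtain ⟨hef, h'⟩ := List.isChain_cons_cons.mp h
      have he : e ∉ M := hhead e rfl
      have hf : f ∈ M := by tauto
      have hg : g ∉ M := by have := (List.isChain_cons_cons.mp h').1; tauto
      have ih : ((g :: t).filter (· ∉ M)).length = ((g :: t).filter (· ∈ M)).length + 1 :=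
        length_filter_notMem (List.isChain_cons_cons.mp h').2 (List.cons_ne_nil g t)
          (fun _ hg' => by cases hg'; exact hg) (fun _ h => hlast _ (by simpa using h))
      simpa [List.filter_cons (x := e), List.filter_cons (x := f), he, hf] using ih

end AltListF

namespace SimpleGraph.Walk

variable {G : SimpleGraph V} {u v x : V} {e f : Sym2 V}

lemma start_mem_of_mem_head?_edges (p : G.Walk u v) (he : e ∈ p.edges.head?) : u ∈ e := by
  cases p with
  | nil => simp at he
  | cons h q =>
    simp only [edges_cons, List.head?_cons, Option.mem_def, Option.some.injEq] at he
    simp [← he]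

lemma IsPath.mem_head?_edges_of_start_mem {p : G.Walk u v} (hp : p.IsPath) (he : e ∈ p.edges)
    (hu : u ∈ e) : e ∈ p.edges.head? := by
  cases p with
  | nil => simp at he
  | cons h q =>
    rw [edges_cons, List.mem_cons] at he
    rcases he with rfl | he
    · simp
    · exact absurd (mem_support_iff_exists_mem_edges.mpr (.inr ⟨e, he, hu⟩))
        ((cons_isPath_iff h q).mp hp).2

lemma notMem_of_mem_edges_of_forall_not_adj (p : G.Walk u v) (he : e ∈ p.edges)
    (hx : ∀ y, ¬G.Adj x y) : x ∉ e := by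
  intro hxe
  obtain ⟨y, rfl⟩ := Sym2.mem_iff_exists.mp hxe
  exact hx y (p.adj_of_mem_edges he)

lemma notMem_support_of_forall_not_adj (p : G.Walk u v) (hp : ¬p.Nil) (hx : ∀ y, ¬G.Adj x y) :
    x ∉ p.support := by
  rw [mem_support_iff_exists_mem_edges_of_not_nil hp]
  rintro ⟨e, he, hxe⟩
  exact p.notMem_of_mem_edges_of_forall_not_adj he hx hxe

variable {M : Finset (Sym2 V)} {p : G.Walk u v}

lemma IsPath.mem_iff_notMem_of_altListF (hp : p.IsPath) (halt : AltListF M p.edges)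
    (he : e ∈ p.edges) (hf : f ∈ p.edges) (hef : e ≠ f) (hxe : x ∈ e) (hxf : x ∈ f) :
    e ∈ M ↔ f ∉ M := by
  induction p with
  | nil => simp at he
  | @cons u y v h q ih =>
    obtain ⟨hq, hu⟩ := (cons_isPath_iff h q).mp hp
    obtain ⟨hhead, haltq⟩ := List.isChain_cons.mp halt
    have hfirst : ∀ g ∈ q.edges, x ∈ g → x ∈ s(u, y) → (s(u, y) ∈ M ↔ g ∉ M) := by
      intro g hg hxg hxuy
      have hxq : x ∈ q.support := mem_support_iff_exists_mem_edges.mpr (.inr ⟨g, hg, hxg⟩)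
      rcases Sym2.mem_iff.mp hxuy with rfl | rfl
      · exact absurd hxq hu
      · exact hhead g (hq.mem_head?_edges_of_start_mem hg hxg)
    rw [edges_cons, List.mem_cons] at he hf
    rcases he with rfl | he <;> rcases hf with rfl | hf
    · exact absurd rfl hef
    · exact hfirst f hf hxf hxe
    · have := hfirst e he hxe hxf
      tauto
    · exact ih hq haltq he hf

lemma IsPath.exists_mem_edges_mem_of_altListF (hp : p.IsPath) (halt : AltListF M p.edges)
    (hx : x ∈ p.support) (hxu : x ≠ u) (hxv : x ≠ v) : ∃ g ∈ p.edges, g ∈ M ∧ x ∈ g := by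
  induction p with
  | nil => exact absurd (by simpa using hx) hxu
  | @cons u y v h q ih =>
    obtain ⟨hhead, haltq⟩ := List.isChain_cons.mp halt
    rw [support_cons, List.mem_cons] at hx
    rcases hx with rfl | hx
    · exact absurd rfl hxu
    by_cases hxy : x = y
    · subst hxy
      by_cases huxM : s(u, x) ∈ M
      · exact ⟨s(u, x), by simp, huxM, by simp⟩
      · cases q with
        | nil => exact absurd rfl hxv
        | @cons _ z _ h' r =>
          have : s(u, x) ∈ M ↔ s(x, z) ∉ M := hhead _ rfl
          exact ⟨s(x, z), by simp, by tauto, by simp⟩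
    · obtain ⟨g, hg, hgM, hxg⟩ := ih ((cons_isPath_iff h q).mp hp).1 haltq hx hxy hxv
      exact ⟨g, by simp [hg], hgM, hxg⟩

end SimpleGraph.Walk

namespace UnmatchedF

variable {M N : Finset (Sym2 V)} {x : V}

lemma mono (h : UnmatchedF M x) (hNM : N ⊆ M) : UnmatchedF N x := fun e he => h e (hNM he)

lemma of_erase [DecidableEq V] {f : Sym2 V} (h : UnmatchedF (M.erase f) x) (hxf : x ∉ f) :
    UnmatchedF M x :=
  fun e he hxe => h e (mem_erase.mpr ⟨by rintro rfl; exact hxf hxe, he⟩) hxe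

end UnmatchedF

namespace IsMatchingF

variable {G : SimpleGraph V} {M N : Finset (Sym2 V)}

lemma eq_of_mem_of_mem (hM : IsMatchingF G M) {e f : Sym2 V} (he : e ∈ M) (hf : f ∈ M) {x : V}
    (hxe : x ∈ e) (hxf : x ∈ f) : e = f :=
  by_contra fun hef => hM.2 e he f hf hef x hxe hxf

lemma unmatchedF_erase [DecidableEq V] (hM : IsMatchingF G M) {f : Sym2 V} (hf : f ∈ M) {x : V}
    (hxf : x ∈ f) : UnmatchedF (M.erase f) x :=
  fun _ he hxe => (mem_erase.mp he).1 (hM.eq_of_mem_of_mem (mem_erase.mp he).2 hf hxe hxf)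

lemma mono (hM : IsMatchingF G M) (hNM : N ⊆ M) : IsMatchingF G N :=
  ⟨fun e he => hM.1 e (hNM he), fun e he f hf => hM.2 e (hNM he) f (hNM hf)⟩

lemma deleteIncidenceSet (hM : IsMatchingF G M) {x : V} (hx : UnmatchedF M x) :
    IsMatchingF (G.deleteIncidenceSet x) M := by
  refine ⟨fun e he => ?_, hM.2⟩
  rw [edgeSet_deleteIncidenceSet]
  exact ⟨hM.1 e he, fun h => hx e he h.2⟩

lemma card_biUnion_toFinset [DecidableEq V] (hM : IsMatchingF G M) :
    (M.biUnion Sym2.toFinset).card = 2 * M.card := by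
  rw [card_biUnion, sum_const_nat fun e he =>
    Sym2.card_toFinset_of_not_isDiag e (G.not_isDiag_of_mem_edgeSet (hM.1 e he)), mul_comm]
  intro e he f hf hef
  exact disjoint_left.mpr fun x hxe hxf =>
    hM.2 e he f hf hef x (Sym2.mem_toFinset.mp hxe) (Sym2.mem_toFinset.mp hxf)

lemma exists_unmatchedF_of_card_lt [DecidableEq V] (hM : IsMatchingF G M) (hN : IsMatchingF G N)
    (hlt : M.card < N.card) : ∃ e ∈ N, ∃ u ∈ e, UnmatchedF M u := by
  by_contra! h
  have hsub : N.biUnion Sym2.toFinset ⊆ M.biUnion Sym2.toFinset := by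
    intro x hx
    obtain ⟨e, he, hxe⟩ := mem_biUnion.mp hx
    have hx' := h e he x (Sym2.mem_toFinset.mp hxe)
    simp only [UnmatchedF, not_forall, not_not] at hx'
    obtain ⟨f, hf, hxf⟩ := hx'
    exact mem_biUnion.mpr ⟨f, hf, Sym2.mem_toFinset.mpr hxf⟩
  have := card_le_card hsub
  rw [hN.card_biUnion_toFinset, hM.card_biUnion_toFinset] at this
  omega

end IsMatchingF

namespace IsAugPathF

variable {G H : SimpleGraph V} {M M' : Finset (Sym2 V)} {u v : V} {p : G.Walk u v}

lemma reverse (hp : IsAugPathF G M p) : IsAugPathF G M p.reverse := by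
  obtain ⟨hpath, huv, halt, hu, hv⟩ := hp
  exact ⟨hpath.reverse, huv.symm, by rw [Walk.edges_reverse]; exact halt.reverse, hv, hu⟩

lemma mapLe (hGH : G ≤ H) (hp : IsAugPathF G M p) : IsAugPathF H M (p.mapLe hGH) := by
  obtain ⟨hpath, huv, halt, hu, hv⟩ := hp
  exact ⟨hpath.mapLe hGH, huv, by rwa [Walk.edges_mapLe_eq_edges], hu, hv⟩

lemma congr (hp : IsAugPathF G M p) (hMM' : ∀ e ∈ p.edges, e ∈ M ↔ e ∈ M')
    (hu : UnmatchedF M' u) (hv : UnmatchedF M' v) : IsAugPathF G M' p :=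
  ⟨hp.1, hp.2.1, hp.2.2.1.congr hMM', hu, hv⟩

variable [DecidableEq V]

lemma card_sdiff_edges (hp : IsAugPathF G M p) :
    (p.edges.toFinset \ M).card = (p.edges.toFinset ∩ M).card + 1 := by
  obtain ⟨hpath, huv, halt, hu, hv⟩ := hp
  have hcard : ∀ q : Sym2 V → Prop, [DecidablePred q] →
      (p.edges.toFinset.filter q).card = (p.edges.filter q).length := fun q _ => by
    rw [← List.toFinset_card_of_nodup (hpath.isTrail.edges_nodup.filter _), List.toFinset_filter]
    simp
  have hlast : ∀ e ∈ p.edges.getLast?, e ∉ M := fun e he heM =>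
    hv e heM (p.reverse.start_mem_of_mem_head?_edges
      (by rwa [Walk.edges_reverse, List.head?_reverse]))
  rw [sdiff_eq_filter, ← filter_mem_eq_inter, hcard, hcard]
  exact halt.length_filter_notMem (mt Walk.edges_eq_nil.mp (Walk.not_nil_of_ne huv))
    (fun e he heM => hu e heM (p.start_mem_of_mem_head?_edges he)) hlast

lemma card_symmDiff (hp : IsAugPathF G M p) :
    (symmDiff M p.edges.toFinset).card = M.card + 1 := by
  rw [Finset.symmDiff_def, card_union_of_disjoint disjoint_sdiff_sdiff, card_sdiff,
    hp.card_sdiff_edges]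
  have := card_le_card (inter_subset_right (s₁ := p.edges.toFinset) (s₂ := M))
  omega

lemma isMatchingF_symmDiff (hM : IsMatchingF G M) (hp : IsAugPathF G M p) :
    IsMatchingF G (symmDiff M p.edges.toFinset) := by
  obtain ⟨hpath, huv, halt, hu, hv⟩ := hp
  have hmem : ∀ {e}, e ∈ p.edges.toFinset ↔ e ∈ p.edges := List.mem_toFinset
  have hmixed : ∀ e ∈ M, e ∉ p.edges → ∀ f ∈ p.edges, ∀ x, x ∈ e → x ∈ f → False := by
    intro e he hep f hf x hxe hxf
    have hx : x ∈ p.support := Walk.mem_support_iff_exists_mem_edges.mpr (.inr ⟨f, hf, hxf⟩)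
    by_cases hxu : x = u
    · exact hu e he (hxu ▸ hxe)
    by_cases hxv : x = v
    · exact hv e he (hxv ▸ hxe)
    obtain ⟨g, hg, hgM, hxg⟩ := hpath.exists_mem_edges_mem_of_altListF halt hx hxu hxv
    exact hep (hM.eq_of_mem_of_mem hgM he hxg hxe ▸ hg)
  refine ⟨fun e he => ?_, fun e he f hf hef x hxe hxf => ?_⟩
  · rcases mem_symmDiff.mp he with ⟨heM, -⟩ | ⟨hep, -⟩
    · exact hM.1 e heM
    · exact p.edges_subset_edgeSet (hmem.mp hep)
  · rcases mem_symmDiff.mp he with ⟨heM, hep⟩ | ⟨hep, heM⟩ <;>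
      rcases mem_symmDiff.mp hf with ⟨hfM, hfp⟩ | ⟨hfp, hfM⟩
    · exact hM.2 e heM f hfM hef x hxe hxf
    · exact hmixed e heM (mt hmem.mpr hep) f (hmem.mp hfp) x hxe hxf
    · exact hmixed f hfM (mt hmem.mpr hfp) e (hmem.mp hep) x hxf hxe
    · have := hpath.mem_iff_notMem_of_altListF halt (hmem.mp hep) (hmem.mp hfp) hef hxe hxf
      tauto

end IsAugPathF

section Berge

variable {G : SimpleGraph V} {M : Finset (Sym2 V)}

lemma isAugPathF_cons_nil {u v : V} (h : G.Adj u v) (hu : UnmatchedF M u)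
    (hv : UnmatchedF M v) : IsAugPathF G M (Walk.cons h .nil) :=
  ⟨by simp [h.ne], h.ne, List.isChain_singleton _, hu, hv⟩

lemma isAugPathF_cons_cons {u w x a : V} (huw : G.Adj u w) (hwx : G.Adj w x) {q : G.Walk x a}
    (hq : q.IsPath) (halt : AltListF M q.edges) (hqu : u ∉ q.support) (hqw : w ∉ q.support)
    (hu : UnmatchedF M u) (hwxM : s(w, x) ∈ M) (hxq : ∀ e ∈ q.edges, x ∈ e → e ∉ M)
    (ha : UnmatchedF M a) : IsAugPathF G M (Walk.cons huw (Walk.cons hwx q)) := by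
  refine ⟨?_, fun hua => hqu (hua ▸ q.end_mem_support), ?_, hu, ha⟩
  · simp only [Walk.cons_isPath_iff, Walk.support_cons, List.mem_cons, not_or]
    exact ⟨⟨hq, hqw⟩, huw.ne, hqu⟩
  · have huwM : s(u, w) ∉ M := fun h => hu _ h (Sym2.mem_mk_left u w)
    refine List.isChain_cons_cons.mpr ⟨by tauto, List.isChain_cons.mpr ⟨fun g hg => ?_, halt⟩⟩
    have := hxq g (List.mem_of_mem_head? hg) (q.start_mem_of_mem_head?_edges hg)
    tauto

lemma exists_isAugPathF_of_isAugPathF_erase [DecidableEq V] {H : SimpleGraph V} (hHG : H ≤ G)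
    (hM : IsMatchingF G M) {u w x : V} (huw : G.Adj u w) (hu : UnmatchedF M u)
    (hwx : s(w, x) ∈ M) (hHu : ∀ y, ¬H.Adj u y) (hHw : ∀ y, ¬H.Adj w y) {a b : V}
    {p : H.Walk a b} (hp : IsAugPathF H (M.erase s(w, x)) p) :
    ∃ (c d : V) (q : G.Walk c d), IsAugPathF G M q := by
  have hMe : ∀ {c d} (q : H.Walk c d), ∀ e ∈ q.edges, e ∈ M.erase s(w, x) ↔ e ∈ M :=
    fun q e he => ⟨mem_of_mem_erase, fun heM => mem_erase.mpr ⟨fun h =>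
      q.notMem_of_mem_edges_of_forall_not_adj he hHw (h ▸ Sym2.mem_mk_left w x), heM⟩⟩
  have hextend : ∀ {c} (q : H.Walk x c), IsAugPathF H (M.erase s(w, x)) q →
      ∃ (c d : V) (q : G.Walk c d), IsAugPathF G M q := by
    rintro c q ⟨hq, hxc, halt, hx, hc⟩
    have hqu := q.notMem_support_of_forall_not_adj (Walk.not_nil_of_ne hxc) hHu
    have hqw := q.notMem_support_of_forall_not_adj (Walk.not_nil_of_ne hxc) hHw
    have hcw : c ≠ w := fun h => hqw (h ▸ q.end_mem_support)
    refine ⟨u, c, _, isAugPathF_cons_cons huw (hM.1 _ hwx) (hq.mapLe hHG) ?_ ?_ ?_ hu hwx ?_ ?_⟩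
    · rw [Walk.edges_mapLe_eq_edges]
      exact halt.congr (hMe q)
    · rwa [Walk.support_mapLe_eq_support]
    · rwa [Walk.support_mapLe_eq_support]
    · rw [Walk.edges_mapLe_eq_edges]
      exact fun e he hxe heM => hx e ((hMe q e he).mpr heM) hxe
    · exact hc.of_erase (by simp [hcw, hxc.symm])
  by_cases hax : a = x
  · subst hax
    exact hextend p hp
  by_cases hbx : b = x
  · subst hbx
    exact hextend p.reverse hp.reverse
  have hpw := p.notMem_support_of_forall_not_adj (Walk.not_nil_of_ne hp.2.1) hHw
  have hnot : ∀ y ∈ p.support, y ≠ x → y ∉ s(w, x) := fun y hy hyx => by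
    rw [Sym2.mem_iff, not_or]
    exact ⟨fun h => hpw (h ▸ hy), hyx⟩
  have ha := hp.2.2.2.1.of_erase (hnot a p.start_mem_support hax)
  have hb := hp.2.2.2.2.of_erase (hnot b p.end_mem_support hbx)
  exact ⟨a, b, _, (hp.congr (hMe p) ha hb).mapLe hHG⟩

end Berge

theorem exists_isAugPathF_of_card_lt [DecidableEq V] {G : SimpleGraph V} {M N : Finset (Sym2 V)}
    (hM : IsMatchingF G M) (hN : IsMatchingF G N) (hlt : M.card < N.card) :
    ∃ (a b : V) (p : G.Walk a b), IsAugPathF G M p := by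
  obtain ⟨e, heN, u, hue, hu⟩ := hM.exists_unmatchedF_of_card_lt hN hlt
  obtain ⟨w, rfl⟩ := Sym2.mem_iff_exists.mp hue
  have huw : G.Adj u w := hN.1 _ heN
  by_cases hw : UnmatchedF M w
  · exact ⟨u, w, _, isAugPathF_cons_nil huw hu hw⟩
  obtain ⟨f, hfM, hwf⟩ : ∃ f ∈ M, w ∈ f := by simpa [UnmatchedF] using hw
  obtain ⟨x, rfl⟩ := Sym2.mem_iff_exists.mp hwf
  set H := (G.deleteIncidenceSet u).deleteIncidenceSet w
  have hHG : H ≤ G := (deleteIncidenceSet_le _ _).trans (deleteIncidenceSet_le _ _)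
  have hHu : ∀ y, ¬H.Adj u y := fun y h =>
    (deleteIncidenceSet_adj.mp (deleteIncidenceSet_adj.mp h).1).2.1 rfl
  have hHw : ∀ y, ¬H.Adj w y := fun y h => (deleteIncidenceSet_adj.mp h).2.1 rfl
  have hM' : IsMatchingF H (M.erase s(w, x)) :=
    ((hM.mono (erase_subset _ _)).deleteIncidenceSet
      (hu.mono (erase_subset _ _))).deleteIncidenceSet (hM.unmatchedF_erase hfM hwf)
  have hN' : IsMatchingF H (N.erase s(u, w)) :=
    ((hN.mono (erase_subset _ _)).deleteIncidenceSet
      (hN.unmatchedF_erase heN (Sym2.mem_mk_left u w))).deleteIncidenceSet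
      (hN.unmatchedF_erase heN (Sym2.mem_mk_right u w))
  have hlt' : (M.erase s(w, x)).card < (N.erase s(u, w)).card := by
    have := card_pos.mpr ⟨_, hfM⟩
    rw [card_erase_of_mem hfM, card_erase_of_mem heN]
    omega
  obtain ⟨a, b, p, hp⟩ := exists_isAugPathF_of_card_lt hM' hN' hlt'
  exact exists_isAugPathF_of_isAugPathF_erase hHG hM huw hu hfM hHu hHw hp
termination_by N.card
decreasing_by exact card_erase_lt_of_mem heN

theorem stmt_1_general (G : SimpleGraph V)
    (M : Finset (Sym2 V)) (hM : IsMatchingF G M) :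
    (∀ N : Finset (Sym2 V), IsMatchingF G N → N.card ≤ M.card) ↔
      ¬∃ (u v : V) (p : G.Walk u v), IsAugPathF G M p := by
  classical
  constructor
  · rintro hmax ⟨u, v, p, hp⟩
    have := hmax _ (hp.isMatchingF_symmDiff hM)
    rw [hp.card_symmDiff] at this
    omega
  · intro hno N hN
    by_contra! hlt
    exact hno (exists_isAugPathF_of_card_lt hM hN hlt)

theorem stmt_1 [Fintype V] [DecidableEq V] (G : SimpleGraph V)
    (M : Finset (Sym2 V)) (hM : IsMatchingF G M) :
    (∀ N : Finset (Sym2 V), IsMatchingF G N → N.card ≤ M.card) ↔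
      ¬∃ (u v : V) (p : G.Walk u v), IsAugPathF G M p :=
  stmt_1_general G M hM
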